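/- With η̄ as constructed (η̄''(x) = 1 for x ≤ 0, linear interpolation to δ on [0, u_L], δ for x ≥ u_L), for any state w < -2u_L one has η̄(u_L | w) ≥ η̄(0 | w) ≥ (1/2)w², and consequently if δ < w²/(u_L - u_R)² then η̄(u_L|u_R) < η̄(u_L|w). -/

import Mathlib

/-!
Taylor's formula with integral remainder writes the relative entropy as
`η(u|v) = ∫_v^u (u - s) η''(s) ds`. Since `η'' ≥ 0`, this grows as `u` moves right of `v`,
so `η(u_L|w) ≥ η(0|w)`, and `η'' = 1` on `[w, 0]` gives `η(0|w) = w²/2` exactly. On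
`[u_L, u_R]` we have `η'' = δ`, so `η(u_L|u_R) = δ (u_L - u_R)²/2`, which is below `w²/2`
under the stated bound on `δ`.
-/

open Set intervalIntegral

noncomputable def relEntropy (η : ℝ → ℝ) (u v : ℝ) : ℝ :=
  η u - η v - deriv η v * (u - v)

section
variable {η : ℝ → ℝ}

theorem relEntropy_eq_integral (hη : ContDiff ℝ 2 η) (u v : ℝ) :
    relEntropy η u v = ∫ s in v..u, (u - s) * deriv (deriv η) s := by
  have hη' : ContDiff ℝ 1 (deriv η) := hη.deriv'
  have hderiv : ∀ s, HasDerivAt (relEntropy η u) (-((u - s) * deriv (deriv η) s)) s := by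
    intro s
    have h0 := (hη.differentiable two_ne_zero s).hasDerivAt
    have h1 := (hη'.differentiable one_ne_zero s).hasDerivAt
    exact (((hasDerivAt_const s (η u)).sub h0).sub
      (h1.mul ((hasDerivAt_id' s).const_sub u))).congr_deriv (by ring)
  have hcont : Continuous fun s => (u - s) * deriv (deriv η) s :=
    (continuous_const.sub continuous_id).mul (hη'.continuous_deriv le_rfl)
  have hftc := integral_eq_sub_of_hasDerivAt (fun s _ => hderiv s) (hcont.intervalIntegrable v u).neg
  rw [integral_neg] at hftc
  simp only [relEntropy, sub_self, mul_zero] at hftc ⊢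
  linarith

theorem relEntropy_eq_of_eqOn_const (hη : ContDiff ℝ 2 η) {u v c : ℝ}
    (hc : EqOn (deriv (deriv η)) (fun _ => c) (uIcc v u)) :
    relEntropy η u v = c * (u - v) ^ 2 / 2 := by
  rw [relEntropy_eq_integral hη, integral_congr fun s hs => by rw [hc hs], integral_mul_const,
    integral_comp_sub_left (fun s => s), integral_id]
  ring

theorem relEntropy_le_relEntropy (hη : ContDiff ℝ 2 η) {u u' v : ℝ} (hvu' : v ≤ u') (hu'u : u' ≤ u)
    (hconvex : ∀ s ∈ Icc v u, 0 ≤ deriv (deriv η) s) :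
    relEntropy η u' v ≤ relEntropy η u v := by
  have hcont : Continuous (deriv (deriv η)) := hη.deriv'.continuous_deriv le_rfl
  have hint : ∀ a b x : ℝ, IntervalIntegrable (fun s => (x - s) * deriv (deriv η) s) MeasureTheory.volume a b :=
    fun a b x => ((continuous_const.sub continuous_id).mul hcont).intervalIntegrable a b
  rw [relEntropy_eq_integral hη, relEntropy_eq_integral hη,
    ← integral_add_adjacent_intervals (hint v u' u) (hint u' u u)]
  have hhead : (∫ s in v..u', (u' - s) * deriv (deriv η) s) ≤ ∫ s in v..u', (u - s) * deriv (deriv η) s :=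
    integral_mono_on hvu' (hint v u' u') (hint v u' u) fun s hs =>
      mul_le_mul_of_nonneg_right (by linarith) (hconvex s ⟨hs.1, hs.2.trans hu'u⟩)
  have htail : 0 ≤ ∫ s in u'..u, (u - s) * deriv (deriv η) s :=
    integral_nonneg hu'u fun s hs =>
      mul_nonneg (by linarith [hs.2]) (hconvex s ⟨hvu'.trans hs.1, hs.2⟩)
  linarith

end

theorem piecewiseCurvature_nonneg {uL δ : ℝ} (huL : 0 < uL) (hδ : 0 ≤ δ) (x : ℝ) :
    0 ≤ if x ≤ 0 then 1 else if x ≤ uL then ((δ - 1) / uL) * x + 1 else δ := by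
  split_ifs with h0 hL
  · exact zero_le_one
  · have : ((δ - 1) / uL) * x + 1 = (δ * x + (uL - x)) / uL := by field_simp; ring
    rw [this]
    exact div_nonneg (by nlinarith) huL.le
  · exact hδ

theorem stmt_8_general (uL uR δ : ℝ) (huL : 0 < uL) (huR : uL < uR) (hδ0 : 0 < δ)
    (ηpp : ℝ → ℝ)
    (hηpp : ηpp = fun x => if x ≤ 0 then 1 else if x ≤ uL then ((δ - 1) / uL) * x + 1 else δ)
    (ηb : ℝ → ℝ) (hC2 : ContDiff ℝ 2 ηb) (hdd : deriv (deriv ηb) = ηpp) :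
    ∀ w : ℝ, w < -2 * uL →
      (ηb uL - ηb w - deriv ηb w * (uL - w) ≥ ηb 0 - ηb w - deriv ηb w * (0 - w)) ∧
      (ηb 0 - ηb w - deriv ηb w * (0 - w) ≥ w ^ 2 / 2) ∧
      (δ < w ^ 2 / (uL - uR) ^ 2 →
        ηb uL - ηb uR - deriv ηb uR * (uL - uR) < ηb uL - ηb w - deriv ηb w * (uL - w)) := by
  subst hηpp
  intro w hw
  change relEntropy ηb 0 w ≤ relEntropy ηb uL w ∧ w ^ 2 / 2 ≤ relEntropy ηb 0 w ∧
    (δ < w ^ 2 / (uL - uR) ^ 2 → relEntropy ηb uL uR < relEntropy ηb uL w)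
  have hw0 : w ≤ 0 := by linarith
  have hmono : relEntropy ηb 0 w ≤ relEntropy ηb uL w :=
    relEntropy_le_relEntropy hC2 hw0 huL.le fun s _ => hdd ▸ piecewiseCurvature_nonneg huL hδ0.le s
  have hnear : relEntropy ηb 0 w = w ^ 2 / 2 := by
    rw [relEntropy_eq_of_eqOn_const (c := 1) hC2 fun s hs => ?_]
    · ring
    rw [uIcc_of_le hw0] at hs
    simp [hdd, hs.2]
  have hfar : relEntropy ηb uL uR = δ * (uL - uR) ^ 2 / 2 := by
    rw [relEntropy_eq_of_eqOn_const hC2 fun s hs => ?_]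
    rw [uIcc_of_ge huR.le] at hs
    rcases hs.1.eq_or_lt with rfl | hlt
    · simp [hdd, huL.not_ge]; field_simp; ring
    · simp [hdd, hlt.not_ge, (huL.trans hlt).not_ge]
  refine ⟨hmono, hnear.ge, fun hδw => ?_⟩
  rw [lt_div_iff₀ (sq_pos_of_neg (sub_neg.2 huR))] at hδw
  linarith

/-- For the tailored entropy η̄: for any w < -2u_L,
η̄(u_L|w) ≥ η̄(0|w) ≥ w²/2, and if δ < w²/(u_L-u_R)² then η̄(u_L|u_R) < η̄(u_L|w). -/
theorem stmt_8 (uL uR δ : ℝ) (huL : 0 < uL) (huR : uL < uR) (hδ0 : 0 < δ) (hδ1 : δ < 1)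
    (ηpp : ℝ → ℝ)
    (hηpp : ηpp = fun x => if x ≤ 0 then 1 else if x ≤ uL then ((δ - 1) / uL) * x + 1 else δ)
    (ηb : ℝ → ℝ) (hC2 : ContDiff ℝ 2 ηb) (hdd : deriv (deriv ηb) = ηpp) :
    ∀ w : ℝ, w < -2 * uL →
      (ηb uL - ηb w - deriv ηb w * (uL - w) ≥ ηb 0 - ηb w - deriv ηb w * (0 - w)) ∧
      (ηb 0 - ηb w - deriv ηb w * (0 - w) ≥ w ^ 2 / 2) ∧
      (δ < w ^ 2 / (uL - uR) ^ 2 →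
        ηb uL - ηb uR - deriv ηb uR * (uL - uR) < ηb uL - ηb w - deriv ηb w * (uL - w)) :=
  stmt_8_general uL uR δ huL huR hδ0 ηpp hηpp ηb hC2 hdd
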